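/- arXiv:2410.04050 — 6 statements merged into one kernel-verified Lean document; each statement's English description precedes it below -/
import Mathlib

section
/- Let n ≥ 4 be a natural number and let A : ℕ → Finset (Fin n) be any sequence of vertex sets satisfying: |A(2i)| = 1 and |A(2i+1)| = 2 for all i ∈ ℕ, A(2i) ⊆ A(2i+1), and A(2i+2) ⊆ A(2i+1). Define the snapshot graph G_r on vertex set Fin n by joining two distinct vertices u, v exactly when (u ∈ A(r) ↔ v ∈ A(r)). Then for every round r ∈ ℕ and every pair of vertices u, v ∈ Fin n there exists a journey from u to v starting at or after round r. In other words, this two-clique dynamic graph is temporally connected. -/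
private lemma journey0 {n : ℕ} (A : ℕ → Finset (Fin n)) (r : ℕ) (u : Fin n) :
    ∃ (m : ℕ) (f : Fin (m + 1) → Fin n) (t : Fin m → ℕ),
      f 0 = u ∧ f (Fin.last m) = u ∧ StrictMono t ∧ (∀ i, r ≤ t i) ∧
      ∀ i : Fin m, f i.castSucc ≠ f i.succ ∧
        (f i.castSucc ∈ A (t i) ↔ f i.succ ∈ A (t i)) := by
  exact ⟨0, fun _ => u, Fin.elim0, rfl, rfl, fun i => i.elim0, fun i => i.elim0, fun i => i.elim0⟩

private lemma journey1 {n : ℕ} (A : ℕ → Finset (Fin n)) (r : ℕ) (u v : Fin n) (t0 : ℕ)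
    (hr : r ≤ t0) (hne : u ≠ v) (hadj : u ∈ A t0 ↔ v ∈ A t0) :
    ∃ (m : ℕ) (f : Fin (m + 1) → Fin n) (t : Fin m → ℕ),
      f 0 = u ∧ f (Fin.last m) = v ∧ StrictMono t ∧ (∀ i, r ≤ t i) ∧
      ∀ i : Fin m, f i.castSucc ≠ f i.succ ∧
        (f i.castSucc ∈ A (t i) ↔ f i.succ ∈ A (t i)) := by
  refine ⟨1, ![u, v], fun _ => t0, rfl, rfl, ?_, fun _ => hr, ?_⟩
  · intro i j hij
    exact absurd (Subsingleton.elim i j) hij.ne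
  · intro i
    fin_cases i
    simpa using ⟨hne, hadj⟩

private lemma journey2 {n : ℕ} (A : ℕ → Finset (Fin n)) (r : ℕ) (u w v : Fin n)
    (t1 t2 : ℕ) (hr : r ≤ t1) (h12 : t1 < t2)
    (hne1 : u ≠ w) (hne2 : w ≠ v)
    (hadj1 : u ∈ A t1 ↔ w ∈ A t1) (hadj2 : w ∈ A t2 ↔ v ∈ A t2) :
    ∃ (m : ℕ) (f : Fin (m + 1) → Fin n) (t : Fin m → ℕ),
      f 0 = u ∧ f (Fin.last m) = v ∧ StrictMono t ∧ (∀ i, r ≤ t i) ∧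
      ∀ i : Fin m, f i.castSucc ≠ f i.succ ∧
        (f i.castSucc ∈ A (t i) ↔ f i.succ ∈ A (t i)) := by
  refine ⟨2, ![u, w, v], ![t1, t2], rfl, rfl, ?_, ?_, ?_⟩
  · intro i j hij
    fin_cases i <;> fin_cases j <;> simp_all <;> omega
  · intro i; fin_cases i <;> simp <;> omega
  · intro i
    fin_cases i
    · simpa using ⟨hne1, hadj1⟩
    · simpa using ⟨hne2, hadj2⟩

/-- Temporal connectivity of the two-clique dynamic graph: the snapshot at round `r`
joins distinct `u, v` exactly when `u ∈ A r ↔ v ∈ A r`.  A journey from `u` to `v`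
starting at or after round `r` is a vertex sequence with strictly increasing rounds,
each consecutive pair adjacent in the corresponding snapshot. -/
theorem two_clique_temporally_connected (n : ℕ) (hn : 4 ≤ n) (A : ℕ → Finset (Fin n))
    (hAeven : ∀ i : ℕ, (A (2 * i)).card = 1)
    (hAodd : ∀ i : ℕ, (A (2 * i + 1)).card = 2)
    (hsub1 : ∀ i : ℕ, A (2 * i) ⊆ A (2 * i + 1))
    (hsub2 : ∀ i : ℕ, A (2 * i + 2) ⊆ A (2 * i + 1)) :
    ∀ (r : ℕ) (u v : Fin n), ∃ (m : ℕ) (f : Fin (m + 1) → Fin n) (t : Fin m → ℕ),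
      f 0 = u ∧ f (Fin.last m) = v ∧ StrictMono t ∧ (∀ i, r ≤ t i) ∧
      ∀ i : Fin m, f i.castSucc ≠ f i.succ ∧
        (f i.castSucc ∈ A (t i) ↔ f i.succ ∈ A (t i)) := by
  intro r u v
  by_cases huv : u = v
  · subst huv; exact journey0 A r u
  -- set up rounds
  set s := 2 * r with hs
  have hrs : r ≤ s := by omega
  obtain ⟨a, ha⟩ := Finset.card_eq_one.mp (hAeven r)
  obtain ⟨x, y, hxy, hxyA⟩ := Finset.card_eq_two.mp (hAodd r)
  have haA1 : a ∈ A (s + 1) := hsub1 r (by simp [ha])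
  -- produce b ≠ a with A (s+1) = {a, b}
  obtain ⟨b, hab, hA1⟩ : ∃ b, a ≠ b ∧ A (s + 1) = {a, b} := by
    rw [hxyA] at haA1 ⊢
    simp only [Finset.mem_insert, Finset.mem_singleton] at haA1
    rcases haA1 with h | h
    · exact ⟨y, h ▸ hxy, by rw [h]⟩
    · exact ⟨x, h ▸ hxy.symm, by rw [h]; ext z; simp [or_comm]⟩
  have hs2 : 2 * (r + 1) = s + 2 := by omega
  obtain ⟨c, hc⟩ := Finset.card_eq_one.mp (hAeven (r + 1))
  rw [hs2] at hc
  have hcmem : c ∈ A (s + 1) := hsub2 r (by rw [show 2*r+2 = s+2 from rfl, hc]; simp)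
  have hcab : c = a ∨ c = b := by
    rw [hA1] at hcmem; simpa using hcmem
  by_cases hua : u = a
  · -- u = a
    subst hua
    by_cases hvb : v = b
    · exact journey1 A r u v (s + 1) (by omega) huv (by subst hvb; simp [hA1])
    · rcases hcab with hca | hcb
      · -- c = a : two hops via b
        refine journey2 A r u b v (s + 1) (s + 2) (by omega) (by omega) hab (Ne.symm hvb)
          (by simp [hA1]) ?_
        rw [hc, hca]
        simp [show b ≠ u from fun h => hab h.symm, show v ≠ u from fun h => huv h.symm]
      · -- c = b : one hop at s+2
        refine journey1 A r u v (s + 2) (by omega) huv ?_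
        rw [hc, hcb]
        constructor
        · intro h; exact absurd (Finset.mem_singleton.mp h) hab
        · intro h; exact absurd (Finset.mem_singleton.mp h) hvb
  · by_cases hva : v = a
    · -- v = a
      subst hva
      by_cases hub : u = b
      · exact journey1 A r u v (s + 1) (by omega) huv (by subst hub; simp [hA1])
      · rcases hcab with hca | hcb
        · -- c = a : need s+3
          obtain ⟨x', y', hxy', hxyA'⟩ := Finset.card_eq_two.mp (hAodd (r + 1))
          rw [show 2*(r+1)+1 = s + 3 by omega] at hxyA'
          have haA3 : v ∈ A (s + 3) := by
            have := hsub1 (r + 1)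
            rw [hs2] at this
            rw [show s + 2 + 1 = s + 3 by omega] at this
            exact this (by rw [hc, hca]; simp)
          obtain ⟨d, had, hA3⟩ : ∃ d, v ≠ d ∧ A (s + 3) = {v, d} := by
            rw [hxyA'] at haA3 ⊢
            simp only [Finset.mem_insert, Finset.mem_singleton] at haA3
            rcases haA3 with h | h
            · exact ⟨y', h ▸ hxy', by rw [h]⟩
            · exact ⟨x', h ▸ hxy'.symm, by rw [h]; ext z; simp [or_comm]⟩
          by_cases hud : u = d
          · exact journey1 A r u v (s + 3) (by omega) huv (by subst hud; simp [hA3])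
          · refine journey2 A r u d v (s + 2) (s + 3) (by omega) (by omega) hud
              (Ne.symm had) ?_ (by simp [hA3])
            rw [hc, hca]
            simp [hua, show d ≠ v from Ne.symm had]
        · -- c = b : one hop at s+2
          refine journey1 A r u v (s + 2) (by omega) huv ?_
          rw [hc, hcb]
          constructor
          · intro h; exact absurd (Finset.mem_singleton.mp h) hub
          · intro h; exact absurd (Finset.mem_singleton.mp h) hab
    · -- u ≠ a, v ≠ a : one hop at s
      refine journey1 A r u v s hrs huv ?_
      rw [ha]
      simp [hua, hva]
end

section
/- Let n ≥ 4 and p, q ∈ ℕ with 3 ≤ q ≤ n − 1, and set k = p·n + q. Let c : ℕ → Fin n → ℕ be a sequence of configurations with ∑_{v} c(r)(v) = k for every round r, and let A : ℕ → Finset (Fin n) satisfy: (i) A(0) = {a₀} for some vertex a₀ with c(0)(a₀) ≥ p + 2; (ii) for every odd r, A(r) = A(r−1) ∪ {b} for some b ∉ A(r−1) with c(r)(b) ≥ c(r)(x) for all x ∉ A(r−1); (iii) for every even r ≥ 2, A(r) = {a} for some a ∈ A(r−1) with c(r)(a) ≥ c(r)(x) for all x ∈ A(r−1); (iv) (conservation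 within components) ∑_{v ∈ A(r)} c(r+1)(v) = ∑_{v ∈ A(r)} c(r)(v) for every r. Then for every round r there exists a vertex v with c(r)(v) ≥ p + 2; in particular, no configuration c(r) is k-balanced dispersed. -/
/-- A configuration of `p*n + q` agents (with `1 ≤ q ≤ n-1`) is `k`-balanced dispersed
when every node holds at least `⌊k/n⌋ = p` and at most `⌈k/n⌉ = p + 1` agents. -/
def BalancedDispersed (n p : ℕ) (c : Fin n → ℕ) : Prop :=
  ∀ v : Fin n, p ≤ c v ∧ c v ≤ p + 1

theorem temporal_impossibility_overfull (n p q : ℕ) (hn : 4 ≤ n) (hq3 : 3 ≤ q)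
    (hqn : q ≤ n - 1) (c : ℕ → Fin n → ℕ) (A : ℕ → Finset (Fin n))
    (hsum : ∀ r : ℕ, ∑ v, c r v = p * n + q)
    (hA0 : ∃ a₀ : Fin n, A 0 = {a₀} ∧ p + 2 ≤ c 0 a₀)
    (hAodd : ∀ r : ℕ, Odd r → ∃ b : Fin n, b ∉ A (r - 1) ∧
      A r = insert b (A (r - 1)) ∧ ∀ x : Fin n, x ∉ A (r - 1) → c r x ≤ c r b)
    (hAeven : ∀ r : ℕ, Even r → 2 ≤ r → ∃ a : Fin n, a ∈ A (r - 1) ∧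
      A r = {a} ∧ ∀ x ∈ A (r - 1), c r x ≤ c r a)
    (hcons : ∀ r : ℕ, ∑ v ∈ A r, c (r + 1) v = ∑ v ∈ A r, c r v) :
    ∀ r : ℕ, (∃ v : Fin n, p + 2 ≤ c r v) ∧ ¬ BalancedDispersed n p (c r) := by
  have key : ∀ r : ℕ,
      (Even r → ∃ a, A r = {a} ∧ p + 2 ≤ c r a) ∧
      (Odd r → ∃ a b, a ≠ b ∧ A r = {a, b} ∧ 2 * p + 3 ≤ c r a + c r b) := by
    intro r
    induction r with
    | zero =>
      refine ⟨fun _ => hA0, fun h => absurd h (by simp)⟩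
    | succ r ih =>
      rcases Nat.even_or_odd r with hr | hr
      · -- r even, r+1 odd
        obtain ⟨a, hAr, hca⟩ := ih.1 hr
        refine ⟨fun h => absurd hr (Nat.even_add_one.mp h), fun _ => ?_⟩
        obtain ⟨b, hb, hAr1, hmax⟩ := hAodd (r + 1) hr.add_one
        simp only [Nat.add_sub_cancel] at hb hAr1 hmax
        have hcons' := hcons r
        rw [hAr] at hcons' hb hmax
        simp only [Finset.sum_singleton] at hcons'
        have hca1 : p + 2 ≤ c (r + 1) a := hcons' ▸ hca
        have hab : b ≠ a := by simpa using hb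
        refine ⟨b, a, hab, by rw [hAr1, hAr], ?_⟩
        -- averaging argument over the complement of {a}
        have hsplit : ∑ v ∈ ({a} : Finset (Fin n)), c (r+1) v
            + ∑ v ∈ ({a} : Finset (Fin n))ᶜ, c (r+1) v = ∑ v, c (r+1) v :=
          Finset.sum_add_sum_compl _ _
        have hcard : (({a} : Finset (Fin n))ᶜ).card = n - 1 := by
          simp [Finset.card_compl]
        have hle : ∑ v ∈ ({a} : Finset (Fin n))ᶜ, c (r+1) v ≤ (n - 1) * c (r+1) b := by
          calc ∑ v ∈ ({a} : Finset (Fin n))ᶜ, c (r+1) v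
              ≤ (({a} : Finset (Fin n))ᶜ).card • c (r+1) b := by
                apply Finset.sum_le_card_nsmul
                intro x hx
                exact hmax x (by simpa using hx)
            _ = (n - 1) * c (r+1) b := by rw [hcard, smul_eq_mul]
        rw [Finset.sum_singleton, hsum (r+1)] at hsplit
        -- from p*n+q = c a + rest ≤ c a + (n-1) * c b, c a ≥ p+2, derive c b + c a ≥ 2p+3
        set t := c (r+1) a with ht
        set cb := c (r+1) b with hcb
        by_contra hcon
        push_neg at hcon
        have h1 : p * n + q ≤ t + (n - 1) * cb := by omega
        have hconN : cb + t ≤ 2 * p + 2 := by omega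
        have hn1 : 1 ≤ n := by omega
        zify [hn1] at h1 hqn
        have hca1' : (p : ℤ) + 2 ≤ t := by exact_mod_cast hca1
        have hcon' : (cb : ℤ) + t ≤ 2 * p + 2 := by exact_mod_cast hconN
        have hq3' : (3 : ℤ) ≤ q := by exact_mod_cast hq3
        have hn' : (4 : ℤ) ≤ n := by exact_mod_cast hn
        nlinarith [mul_nonneg (sub_nonneg.2 hca1') (by linarith : (0:ℤ) ≤ (n:ℤ) - 2),
          mul_le_mul_of_nonneg_left hca1' (by linarith : (0:ℤ) ≤ (n:ℤ) - 2)]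
      · -- r odd, r+1 even
        obtain ⟨a, b, hab, hAr, hS⟩ := ih.2 hr
        refine ⟨fun _ => ?_, fun h => absurd hr (Nat.odd_add_one.mp h)⟩
        obtain ⟨a', ha'mem, hAr1, hmax⟩ := hAeven (r + 1) (Nat.even_add_one.mpr (Nat.not_even_iff_odd.mpr hr)) (by rcases hr with ⟨k, hk⟩; omega)
        simp only [Nat.add_sub_cancel] at ha'mem hAr1 hmax
        have hcons' := hcons r
        rw [hAr] at hcons' ha'mem hmax
        rw [Finset.sum_pair hab, Finset.sum_pair hab] at hcons'
        have hS1 : 2 * p + 3 ≤ c (r+1) a + c (r+1) b := hcons' ▸ hS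
        have h1 : c (r+1) a ≤ c (r+1) a' := hmax a (by simp)
        have h2 : c (r+1) b ≤ c (r+1) a' := hmax b (by simp)
        exact ⟨a', hAr1, by omega⟩
  intro r
  have hex : ∃ v, p + 2 ≤ c r v := by
    rcases Nat.even_or_odd r with hr | hr
    · obtain ⟨a, _, h⟩ := (key r).1 hr
      exact ⟨a, h⟩
    · obtain ⟨a, b, _, _, h⟩ := (key r).2 hr
      rcases le_or_gt (p + 2) (c r a) with h' | h'
      · exact ⟨a, h'⟩
      · exact ⟨b, by omega⟩
  refine ⟨hex, fun hbal => ?_⟩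
  obtain ⟨v, hv⟩ := hex
  have := (hbal v).2
  omega
end

section
/- Let n ≥ 6, p ≥ 1, and q ∈ ℕ with 3 ≤ q ≤ n − 3, and set k = p·n + q. Let c : ℕ → Fin n → ℕ be a sequence of configurations with ∑_{v} c(r)(v) = k for every round r and with c(r)(v) ≤ p + 1 for every round r and every vertex v. Let A : ℕ → Finset (Fin n) satisfy: (i) A(0) = {a₀} for some vertex a₀ with c(0)(a₀) ≤ p − 1; (ii) for every odd r, A(r) = A(r−1) ∪ {b} for some b ∉ A(r−1) with c(r)(b) ≤ c(r)(x) for all x ∉ A(r−1); (iii) for every even r ≥ 2, A(r) = {a} for some a ∈ A(r−1) with c(r)(a) ≤ c(r)(x) for all x ∈ A(r−1); (iv) (conservation within components) ∑_{v ∈ A(r)} c(r+1)(v) = ∑_{v ∈ A(r)} c(r)(v) for every r. Then for every round r there exists a vertex v with c(r)(v) ≤ p − 1; in particular, no configuration c(r) is k-balanced dispersed. -/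
theorem temporal_impossibility_underfull (n p q : ℕ) (hn : 6 ≤ n) (hp : 1 ≤ p)
    (hq3 : 3 ≤ q) (hqn : q ≤ n - 3) (c : ℕ → Fin n → ℕ) (A : ℕ → Finset (Fin n))
    (hsum : ∀ r : ℕ, ∑ v, c r v = p * n + q)
    (hub : ∀ (r : ℕ) (v : Fin n), c r v ≤ p + 1)
    (hA0 : ∃ a₀ : Fin n, A 0 = {a₀} ∧ c 0 a₀ ≤ p - 1)
    (hAodd : ∀ r : ℕ, Odd r → ∃ b : Fin n, b ∉ A (r - 1) ∧
      A r = insert b (A (r - 1)) ∧ ∀ x : Fin n, x ∉ A (r - 1) → c r b ≤ c r x)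
    (hAeven : ∀ r : ℕ, Even r → 2 ≤ r → ∃ a : Fin n, a ∈ A (r - 1) ∧
      A r = {a} ∧ ∀ x ∈ A (r - 1), c r a ≤ c r x)
    (hcons : ∀ r : ℕ, ∑ v ∈ A r, c (r + 1) v = ∑ v ∈ A r, c r v) :
    ∀ r : ℕ, (∃ v : Fin n, c r v ≤ p - 1) ∧ ¬ BalancedDispersed n p (c r) := by
  have inv : ∀ r : ℕ,
      (Even r → ∃ a : Fin n, A r = {a} ∧ c r a + 1 ≤ p) ∧
      (Odd r → ∃ a b : Fin n, a ≠ b ∧ A r = {a, b} ∧ c r a + c r b + 1 ≤ 2 * p) := by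
    intro r
    induction r with
    | zero =>
      obtain ⟨a₀, h1, h2⟩ := hA0
      refine ⟨fun _ => ⟨a₀, h1, by omega⟩, fun h => ?_⟩
      rw [Nat.odd_iff] at h; omega
    | succ r ih =>
      rcases Nat.even_or_odd r with he | ho
      · -- r even, r+1 odd
        obtain ⟨a, hAr, hca⟩ := ih.1 he
        refine ⟨fun h => ?_, fun _ => ?_⟩
        · rw [Nat.even_iff] at h he; omega
        · obtain ⟨b, hb, hA1, hmin⟩ := hAodd (r + 1) (Even.add_one he)
          rw [Nat.add_sub_cancel, hAr] at hb hA1 hmin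
          have hba : b ≠ a := by simpa using hb
          have hcs : c (r + 1) a = c r a := by
            have := hcons r
            rwa [hAr, Finset.sum_singleton, Finset.sum_singleton] at this
          refine ⟨b, a, hba, by rw [hA1, Finset.pair_comm], ?_⟩
          by_cases hbp : c (r + 1) b ≤ p
          · omega
          · -- every vertex other than a has value p+1
            have hall : ∀ x : Fin n, x ≠ a → c (r + 1) x = p + 1 := by
              intro x hx
              have h1 := hmin x (by simpa using hx)
              have h2 := hub (r + 1) x
              have h3 := hub (r + 1) b
              omega
            have hsumdec : c (r + 1) a + ∑ v ∈ Finset.univ.erase a, c (r + 1) v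
                = p * n + q := by
              rw [Finset.add_sum_erase _ _ (Finset.mem_univ a), hsum]
            have herase : ∑ v ∈ Finset.univ.erase a, c (r + 1) v = (n - 1) * (p + 1) := by
              rw [Finset.sum_congr rfl (fun x hx => hall x (Finset.ne_of_mem_erase hx)),
                Finset.sum_const, Finset.card_erase_of_mem (Finset.mem_univ a),
                Finset.card_univ, Fintype.card_fin, smul_eq_mul]
            have h2 : (n - 1) * (p + 1) + (p + 1) = n * (p + 1) := by
              obtain ⟨m, rfl⟩ : ∃ m, n = m + 1 := ⟨n - 1, by omega⟩
              simp only [Nat.add_sub_cancel]; ring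
            have h3 : n * (p + 1) = p * n + n := by ring
            have h4 : q + 3 ≤ n := by omega
            have hcb : c (r + 1) b = p + 1 := by have := hub (r + 1) b; omega
            rw [herase] at hsumdec
            have : c (r + 1) a + 2 ≤ p := by nlinarith
            omega
      · -- r odd, r+1 even
        obtain ⟨a, b, hab, hAr, hsum2⟩ := ih.2 ho
        refine ⟨fun _ => ?_, fun h => ?_⟩
        · have hr1 : 2 ≤ r + 1 := by
            rcases ho with ⟨m, hm⟩; omega
          obtain ⟨a', ha', hA1, hmin⟩ := hAeven (r + 1) (Odd.add_one ho) hr1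
          rw [Nat.add_sub_cancel, hAr] at ha' hmin
          have hcs : c (r + 1) a + c (r + 1) b = c r a + c r b := by
            have := hcons r
            rwa [hAr, Finset.sum_pair hab, Finset.sum_pair hab] at this
          have h1 := hmin a (by simp)
          have h2 := hmin b (by simp)
          exact ⟨a', hA1, by omega⟩
        · rw [Nat.odd_iff] at ho h; omega
  intro r
  have hv : ∃ v : Fin n, c r v + 1 ≤ p := by
    rcases Nat.even_or_odd r with he | ho
    · obtain ⟨a, _, ha⟩ := (inv r).1 he
      exact ⟨a, ha⟩
    · obtain ⟨a, b, _, _, hsum2⟩ := (inv r).2 ho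
      rcases le_total (c r a) (c r b) with h | h
      · exact ⟨a, by omega⟩
      · exact ⟨b, by omega⟩
  obtain ⟨v, hv⟩ := hv
  refine ⟨⟨v, by omega⟩, fun hbal => ?_⟩
  have := (hbal v).1
  omega
end

section
/- Let n ≥ 4 and p, q ∈ ℕ with 3 ≤ q ≤ n − 1. Let c : Fin n → ℕ be a configuration with ∑_v c(v) = p·n + q. Suppose u is a node with c(u) ≥ p + 2, and let b be a node of Fin n \ {u} maximizing c over Fin n \ {u}. Then c(u) + c(b) ≥ 2p + 3; equivalently, ⌈(c(u) + c(b))/2⌉ ≥ p + 2. -/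
theorem overfull_pair_total (n p q : ℕ) (hn : 4 ≤ n) (hq3 : 3 ≤ q) (hqn : q ≤ n - 1)
    (c : Fin n → ℕ) (hsum : ∑ v, c v = p * n + q)
    (u b : Fin n) (hu : p + 2 ≤ c u) (hb : b ≠ u)
    (hmax : ∀ x : Fin n, x ≠ u → c x ≤ c b) :
    2 * p + 3 ≤ c u + c b ∧ p + 2 ≤ (c u + c b + 1) / 2 := by
  have hkey : p * n + q ≤ c u + (n - 1) * c b := by
    have h1 : ∑ v, c v = c u + ∑ v ∈ Finset.univ.erase u, c v :=
      (Finset.add_sum_erase _ _ (Finset.mem_univ u)).symm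
    have h2 : ∑ v ∈ Finset.univ.erase u, c v ≤ (n - 1) * c b := by
      have := Finset.sum_le_card_nsmul (Finset.univ.erase u) c (c b)
        (fun x hx => hmax x (Finset.ne_of_mem_erase hx))
      simpa [Finset.card_erase_of_mem, Finset.card_univ, smul_eq_mul] using this
    omega
  have hcase : 2 * p + 3 ≤ c u + c b := by
    rcases le_or_gt (c b) p with h | h
    · nlinarith [Nat.sub_add_cancel (show 1 ≤ n by omega),
        Nat.mul_le_mul_left (n - 1) h]
    · omega
  exact ⟨hcase, by omega⟩
end

section
/- Let n ≥ 6, p ≥ 1, and q ∈ ℕ with 3 ≤ q ≤ n − 3. Let c : Fin n → ℕ be a configuration with ∑_v c(v) = p·n + q and c(v) ≤ p + 1 for every node v. Suppose u is a node with c(u) ≤ p − 1, and let b be a node of Fin n \ {u} minimizing c over Fin n \ {u}. Then c(u) + c(b) ≤ 2p − 1; in particular, however the total c(u) + c(b) is redistributed between two nodes, one of them receives at most p − 1 agents. -/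
theorem underfull_pair_total (n p q : ℕ) (hn : 6 ≤ n) (hp : 1 ≤ p) (hq3 : 3 ≤ q)
    (hqn : q ≤ n - 3) (c : Fin n → ℕ) (hsum : ∑ v, c v = p * n + q)
    (hub : ∀ v : Fin n, c v ≤ p + 1)
    (u b : Fin n) (hu : c u ≤ p - 1) (hb : b ≠ u)
    (hmin : ∀ x : Fin n, x ≠ u → c b ≤ c x) :
    c u + c b ≤ 2 * p - 1 ∧
    ∀ a b' : ℕ, a + b' = c u + c b → a ≤ p - 1 ∨ b' ≤ p - 1 := by
  have key : c u + c b ≤ 2 * p - 1 := by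
    by_cases h : c b ≤ p
    · omega
    · have hcb : c b = p + 1 := le_antisymm (hub b) (by omega)
      have hall : ∀ x : Fin n, x ≠ u → c x = p + 1 := fun x hx =>
        le_antisymm (hub x) (hcb ▸ hmin x hx)
      have hsplit : ∑ v, c v = c u + ∑ v ∈ Finset.univ.erase u, c v :=
        (Finset.add_sum_erase _ c (Finset.mem_univ u)).symm
      have h2 : ∑ v ∈ Finset.univ.erase u, c v = (n - 1) * (p + 1) := by
        rw [Finset.sum_congr rfl (fun x hx => hall x (Finset.ne_of_mem_erase hx))]
        simp [Finset.card_erase_of_mem, Finset.sum_const, smul_eq_mul]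
      have heq : p * n + q = c u + (n - 1) * (p + 1) := by rw [← hsum, hsplit, h2]
      have hexp : (n - 1) * (p + 1) + (p + 1) = n * (p + 1) := by
        have : n - 1 + 1 = n := by omega
        calc (n - 1) * (p + 1) + (p + 1) = (n - 1 + 1) * (p + 1) := by ring
          _ = n * (p + 1) := by rw [this]
      have hnp : n * (p + 1) = p * n + n := by ring
      have heq2 : p * n + q + (p + 1) = c u + (p * n + n) := by
        rw [← hnp, ← hexp, heq]; omega
      have : q + (p + 1) = c u + n := by omega
      omega
  refine ⟨key, fun a b' hab => ?_⟩
  omega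
end

section
/- Let n ≥ 4 and p, q ∈ ℕ with q ≥ 5. Let a : Fin n → ℕ be antitone (that is, i ≤ j implies a(j) ≤ a(i)) with ∑_i a(i) = p·n + q and a(0) ≥ p + 2. Then a(0) + a(1) + a(2) + a(3) ≥ 4p + 5. -/
theorem four_fullest_nodes (n p q : ℕ) (hn : 4 ≤ n) (hq : 5 ≤ q)
    (a : Fin n → ℕ) (hanti : Antitone a)
    (hsum : ∑ i, a i = p * n + q)
    (h0 : p + 2 ≤ a ⟨0, by omega⟩) :
    4 * p + 5 ≤ a ⟨0, by omega⟩ + a ⟨1, by omega⟩ + a ⟨2, by omega⟩ + a ⟨3, by omega⟩ := by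
  obtain ⟨m, rfl⟩ : ∃ m, n = m + 4 := ⟨n - 4, by omega⟩
  by_cases h3 : p + 1 ≤ a ⟨3, by omega⟩
  · have h1 : a ⟨3, by omega⟩ ≤ a ⟨1, by omega⟩ := hanti (by simp [Fin.le_def])
    have h2 : a ⟨3, by omega⟩ ≤ a ⟨2, by omega⟩ := hanti (by simp [Fin.le_def])
    omega
  · push_neg at h3
    set f : ℕ → ℕ := fun i => if h : i < m + 4 then a ⟨i, h⟩ else 0 with hf
    have hsum' : ∑ i ∈ Finset.range (m + 4), f i = p * (m + 4) + q := by
      rw [← hsum, ← Fin.sum_univ_eq_sum_range]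
      refine Finset.sum_congr rfl fun i _ => ?_
      simp [hf, i.isLt]
    have hsplit : ∑ i ∈ Finset.range 4, f i + ∑ i ∈ Finset.Ico 4 (m + 4), f i
        = ∑ i ∈ Finset.range (m + 4), f i := by
      simp only [Finset.range_eq_Ico]
      exact Finset.sum_Ico_consecutive _ (by omega) (by omega)
    have htail : ∑ i ∈ Finset.Ico 4 (m + 4), f i ≤ m * p := by
      have := Finset.sum_le_card_nsmul (Finset.Ico 4 (m + 4)) f p (fun i hi => by
        simp only [Finset.mem_Ico] at hi
        have hilt : i < m + 4 := hi.2
        have : a ⟨i, hilt⟩ ≤ a ⟨3, by omega⟩ := hanti (by simp [Fin.le_def]; omega)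
        simp only [hf, dif_pos hilt]
        omega)
      simpa [Nat.card_Ico, smul_eq_mul] using this
    have hhead : ∑ i ∈ Finset.range 4, f i
        = a ⟨0, by omega⟩ + a ⟨1, by omega⟩ + a ⟨2, by omega⟩ + a ⟨3, by omega⟩ := by
      simp [Finset.sum_range_succ, hf]
    have hmul : p * (m + 4) = p * m + 4 * p := by ring
    have hmp : m * p = p * m := by ring
    omega
end
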